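/- arXiv:2312.10247 — 2 statements merged into one kernel-verified Lean document; each statement's English description precedes it below -/
import Mathlib

section
/- Let w ≥ 2 be an integer and let n ≤ 2^(w-2) be a positive integer. Let α ≥ 1 and let y_{i,j} (for 1 ≤ i ≤ n, 1 ≤ j ≤ α) be integers satisfying -2^w < y_{i,j} < 2^w for all i, j (i.e., each input superaccumulator is regularized with window size w). For each j define the column sum s_j = Σ_{i=1}^n y_{i,j}, and suppose integers c_1, c_2, ..., c_{α+1} and r_1, ..., r_α are given with c_1 = 0, s_j = c_{j+1}·2^(w-1) + r_j, and -2^(w-1) < r_j < 2^(w-1) for all j. Then the updated values s'_j = r_j + c_j satisfy -2^w < s'_j < 2^w for all j = 1, ..., α; that is, the result of the single-round summation is again a regularized superaccumulator. -/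
/-!
With `R = 2^(w-1)`, each column sum is a sum of `n ≤ 2^(w-2)` terms of absolute value
below `2^w`, so `|s_j| ≤ R^2`. Since `s_j = c_{j+1} R + r_j` with `|r_j| < R`, this forces
`|c_{j+1}| ≤ R`, and hence `|r_j + c_j| < R + R = 2^w`.
-/

theorem abs_sum_le_card_mul {ι α : Type*} [Ring α] [LinearOrder α] [IsOrderedRing α]
    (s : Finset ι) (f : ι → α) (B : α) (h : ∀ i ∈ s, |f i| ≤ B) :
    |∑ i ∈ s, f i| ≤ s.card * B :=
  calc |∑ i ∈ s, f i| ≤ ∑ i ∈ s, |f i| := Finset.abs_sum_le_sum_abs f s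
    _ ≤ s.card • B := Finset.sum_le_card_nsmul s _ B h
    _ = s.card * B := nsmul_eq_mul _ _

theorem abs_le_of_abs_mul_add_le_sq {c r R : ℤ} (hr : |r| < R) (h : |c * R + r| ≤ R ^ 2) :
    |c| ≤ R := by
  have hR : 0 < R := (abs_nonneg r).trans_lt hr
  have hcR : |c| * R < (R + 1) * R :=
    calc |c| * R = |c * R + r - r| := by rw [add_sub_cancel_right, abs_mul, abs_of_pos hR]
      _ ≤ |c * R + r| + |r| := abs_sub _ _
      _ < R ^ 2 + R := by linarith
      _ = (R + 1) * R := by ring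
  exact Int.lt_add_one_iff.mp (lt_of_mul_lt_mul_right hcR hR.le)

theorem card_mul_two_pow_le_sq {w n : ℕ} (hw : 2 ≤ w) (hn : (n : ℤ) ≤ 2 ^ (w - 2)) :
    (n : ℤ) * 2 ^ w ≤ (2 ^ (w - 1)) ^ 2 :=
  calc (n : ℤ) * 2 ^ w ≤ 2 ^ (w - 2) * 2 ^ w := by gcongr
    _ = (2 ^ (w - 1)) ^ 2 := by rw [← pow_add, ← pow_mul]; congr 1; omega

theorem superaccumulator_sum_regularized_general
    (w n α : ℕ) (hw : 2 ≤ w) (hn' : (n : ℤ) ≤ 2 ^ (w - 2))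
    (y : ℕ → ℕ → ℤ)
    (hy : ∀ i ∈ Finset.Icc 1 n, ∀ j ∈ Finset.Icc 1 α,
      -2 ^ w < y i j ∧ y i j < 2 ^ w)
    (s : ℕ → ℤ) (hs : ∀ j ∈ Finset.Icc 1 α, s j = ∑ i ∈ Finset.Icc 1 n, y i j)
    (c r : ℕ → ℤ) (hc1 : c 1 = 0)
    (hsplit : ∀ j ∈ Finset.Icc 1 α, s j = c (j + 1) * 2 ^ (w - 1) + r j)
    (hr : ∀ j ∈ Finset.Icc 1 α, -2 ^ (w - 1) < r j ∧ r j < 2 ^ (w - 1)) :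
    ∀ j ∈ Finset.Icc 1 α, -2 ^ w < r j + c j ∧ r j + c j < 2 ^ w := by
  have hr' : ∀ j ∈ Finset.Icc 1 α, |r j| < 2 ^ (w - 1) := fun j hj => abs_lt.mpr (hr j hj)
  have hcarry : ∀ j ∈ Finset.Icc 1 α, |c (j + 1)| ≤ 2 ^ (w - 1) := by
    intro j hj
    refine abs_le_of_abs_mul_add_le_sq (hr' j hj) ?_
    rw [← hsplit j hj, hs j hj]
    refine le_trans ?_ (card_mul_two_pow_le_sq hw hn')
    simpa using abs_sum_le_card_mul _ _ _ fun i hi => (abs_lt.mpr (hy i hi j hj)).le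
  have hcj : ∀ j ∈ Finset.Icc 1 α, |c j| ≤ 2 ^ (w - 1) := by
    intro j hj
    obtain ⟨hj1, hjα⟩ := Finset.mem_Icc.mp hj
    rcases hj1.eq_or_lt with rfl | hj1
    · simp [hc1]
    · simpa [Nat.sub_add_cancel hj1.le] using
        hcarry (j - 1) (Finset.mem_Icc.mpr ⟨by omega, by omega⟩)
  intro j hj
  rw [← abs_lt]
  calc |r j + c j| ≤ |r j| + |c j| := abs_add_le _ _
    _ < 2 ^ (w - 1) + 2 ^ (w - 1) := add_lt_add_of_lt_of_le (hr' j hj) (hcj j hj)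
    _ = 2 ^ w := by rw [← two_mul, ← pow_succ']; congr 1; omega

/-- Summing `n ≤ 2^(w-2)` regularized superaccumulators componentwise, splitting each
column sum `s j = c (j+1) * 2^(w-1) + r j` with `-2^(w-1) < r j < 2^(w-1)` and `c 1 = 0`,
yields updated components `r j + c j` that are again regularized: `-2^w < r j + c j < 2^w`. -/
theorem superaccumulator_sum_regularized
    (w n α : ℕ) (hw : 2 ≤ w) (hn : 0 < n) (hn' : (n : ℤ) ≤ 2 ^ (w - 2)) (hα : 1 ≤ α)
    (y : ℕ → ℕ → ℤ)
    (hy : ∀ i ∈ Finset.Icc 1 n, ∀ j ∈ Finset.Icc 1 α,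
      -2 ^ w < y i j ∧ y i j < 2 ^ w)
    (s : ℕ → ℤ) (hs : ∀ j ∈ Finset.Icc 1 α, s j = ∑ i ∈ Finset.Icc 1 n, y i j)
    (c r : ℕ → ℤ) (hc1 : c 1 = 0)
    (hsplit : ∀ j ∈ Finset.Icc 1 α, s j = c (j + 1) * 2 ^ (w - 1) + r j)
    (hr : ∀ j ∈ Finset.Icc 1 α, -2 ^ (w - 1) < r j ∧ r j < 2 ^ (w - 1)) :
    ∀ j ∈ Finset.Icc 1 α, -2 ^ w < r j + c j ∧ r j + c j < 2 ^ w :=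
  superaccumulator_sum_regularized_general w n α hw hn' y hy s hs c r hc1 hsplit hr
end

section
/- Let w ≥ 1 and m ≥ 0 be integers, let v be a natural number with v < 2^(m+1), and let p ≥ 0 be a natural number. Then every index j such that the j-th digit of 2^p · v in base 2^w is nonzero satisfies ⌊p/w⌋ ≤ j ≤ ⌊p/w⌋ + ⌈(m+1)/w⌉; in particular, at most ⌈(m+1)/w⌉ + 1 base-2^w digits of 2^p · v are nonzero. -/
/-- Writing `2^p * v` (with `v < 2^(m+1)`) in base `2^w`: every index `j` whose
base-`2^w` digit `(2^p * v / 2^(w*j)) % 2^w` is nonzero satisfies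
`⌊p/w⌋ ≤ j ≤ ⌊p/w⌋ + ⌈(m+1)/w⌉`; in particular at most `⌈(m+1)/w⌉ + 1` digits
are nonzero. (Here `⌈(m+1)/w⌉ = (m + 1 + (w - 1)) / w` for `w ≥ 1`.) -/
theorem superaccumulator_nonzero_entries
    (w m : ℕ) (hw : 1 ≤ w) (v : ℕ) (hv : v < 2 ^ (m + 1)) (p : ℕ) :
    (∀ j : ℕ, (2 ^ p * v / 2 ^ (w * j)) % 2 ^ w ≠ 0 →
        p / w ≤ j ∧ j ≤ p / w + (m + 1 + (w - 1)) / w) ∧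
    {j : ℕ | (2 ^ p * v / 2 ^ (w * j)) % 2 ^ w ≠ 0}.Finite ∧
    Nat.card {j : ℕ | (2 ^ p * v / 2 ^ (w * j)) % 2 ^ w ≠ 0} ≤
      (m + 1 + (w - 1)) / w + 1 := by
  set q := (m + 1 + (w - 1)) / w with hq
  clear_value q
  have hq' : m + 1 ≤ w * q := by
    have h1 : m + 1 + (w - 1) = m + w := by omega
    have h2 : (m + w) / w = m / w + 1 := Nat.add_div_right m hw
    have h3 := Nat.div_add_mod m w
    have h4 : m % w < w := Nat.mod_lt _ hw
    have : q = m / w + 1 := by rw [hq, h1, h2]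
    rw [this]
    nlinarith [Nat.div_add_mod m w]
  have key : ∀ j : ℕ, (2 ^ p * v / 2 ^ (w * j)) % 2 ^ w ≠ 0 →
      p / w ≤ j ∧ j ≤ p / w + q := by
    intro j hj
    constructor
    · by_contra h
      push_neg at h
      have hle : w * (j + 1) ≤ p := by
        calc w * (j + 1) ≤ w * (p / w) := Nat.mul_le_mul_left _ (by omega)
          _ ≤ p := Nat.mul_div_le p w
      apply hj
      have hsplit : p = w * j + w + (p - w * (j + 1)) := by
        have : w * (j + 1) = w * j + w := by ring
        omega
      have : 2 ^ p * v / 2 ^ (w * j) = 2 ^ w * (2 ^ (p - w * (j + 1)) * v) := by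
        have hp2 : (2:ℕ) ^ p = 2 ^ (w * j) * (2 ^ w * 2 ^ (p - w * (j + 1))) := by
          rw [← pow_add, ← pow_add]; congr 1; omega
        rw [hp2, mul_assoc, Nat.mul_div_cancel_left _ (Nat.pow_pos (by norm_num)),
          mul_assoc]
      rw [this, Nat.mul_mod_right]
    · by_contra h
      push_neg at h
      apply hj
      have hlt : 2 ^ p * v < 2 ^ (w * j) := by
        have h1 : 2 ^ p * v < 2 ^ (p + m + 1) := by
          rw [show p + m + 1 = p + (m + 1) by ring, pow_add]
          exact mul_lt_mul_of_pos_left hv (by positivity)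
        have h2 : p + m + 1 ≤ w * j := by
          have hp : p < w * (p / w) + w := by
            have := Nat.div_add_mod p w
            have := Nat.mod_lt p hw
            omega
          have : w * (p / w + q + 1) ≤ w * j := Nat.mul_le_mul_left _ (by omega)
          nlinarith
        exact lt_of_lt_of_le h1 (Nat.pow_le_pow_right (by norm_num) h2)
      rw [Nat.div_eq_of_lt hlt, Nat.zero_mod]
  refine ⟨key, ?_, ?_⟩
  · exact Set.Finite.subset (Finset.Icc (p / w) (p / w + q)).finite_toSet
      (fun j hj => Finset.mem_coe.mpr (Finset.mem_Icc.mpr (key j hj)))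
  · have hsub : {j : ℕ | (2 ^ p * v / 2 ^ (w * j)) % 2 ^ w ≠ 0} ⊆
        ↑(Finset.Icc (p / w) (p / w + q)) :=
      fun j hj => Finset.mem_coe.mpr (Finset.mem_Icc.mpr (key j hj))
    calc Nat.card {j : ℕ | (2 ^ p * v / 2 ^ (w * j)) % 2 ^ w ≠ 0}
        = {j : ℕ | (2 ^ p * v / 2 ^ (w * j)) % 2 ^ w ≠ 0}.ncard := rfl
      _ ≤ (↑(Finset.Icc (p / w) (p / w + q)) : Set ℕ).ncard :=
          Set.ncard_le_ncard hsub (Finset.finite_toSet _)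
      _ = (Finset.Icc (p / w) (p / w + q)).card := Set.ncard_coe_finset _
      _ = q + 1 := by rw [Nat.card_Icc]; omega
end
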